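/- arXiv:1807.09139 — 4 statements merged into one kernel-verified Lean document; each statement's English description precedes it below -/
import Mathlib

section
/- Let f ∈ U_i(n,q), 1 ≤ r ≤ n and k ∈ Σ_q. Then f_k^r ∈ U_{i-1}(n-1,q) ⊕ U_i(n-1,q), i.e., f_k^r is a sum of a function satisfying the eigenvalue equation for (n-1)(q-1)-q(i-1) and one for (n-1)(q-1)-qi on H(n-1,q). -/
/-- Sum of `f` over the neighbors of `x` in the Hamming graph `H(n,q)`. -/
noncomputable def adjSum (n q : ℕ) (f : (Fin n → Fin q) → ℝ) (x : Fin n → Fin q) : ℝ :=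
  ∑ y : Fin n → Fin q, if hammingDist x y = 1 then f y else 0

/-- `f` satisfies the eigenfunction equation for eigenvalue `lam` on `H(n,q)`. -/
def IsEigenfun (n q : ℕ) (lam : ℝ) (f : (Fin n → Fin q) → ℝ) : Prop :=
  ∀ x, adjSum n q f x = lam * f x

/-- `f ∈ U_i(n,q)`, the eigenspace for eigenvalue `n(q-1) - q i`. -/
def memU (n q i : ℕ) (f : (Fin n → Fin q) → ℝ) : Prop :=
  IsEigenfun n q ((n : ℝ) * ((q : ℝ) - 1) - (q : ℝ) * (i : ℝ)) f

/-- `f ∈ U_{[i,j]}(n,q) = U_i ⊕ ⋯ ⊕ U_j`. -/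
def memUI (n q i j : ℕ) (f : (Fin n → Fin q) → ℝ) : Prop :=
  ∃ g : ℕ → (Fin n → Fin q) → ℝ,
    (∀ t ∈ Finset.Icc i j, memU n q t (g t)) ∧ f = ∑ t ∈ Finset.Icc i j, g t

/-- The cardinality of the support of `f : Σ_q^n → ℝ`. -/
noncomputable def suppCard (n q : ℕ) (f : (Fin n → Fin q) → ℝ) : ℕ :=
  Nat.card {x : Fin n → Fin q // f x ≠ 0}

lemma hd_eq_sum {m q : ℕ} (x y : Fin m → Fin q) :
    hammingDist x y = ∑ i, if x i = y i then 0 else 1 := by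
  rw [hammingDist, Finset.card_filter]
  simp [ite_not]

lemma hd_insertNth {n q : ℕ} (r : Fin (n + 1)) (a b : Fin q) (y z : Fin n → Fin q) :
    hammingDist (r.insertNth a y : Fin (n + 1) → Fin q) (r.insertNth b z)
      = (if a = b then 0 else 1) + hammingDist y z := by
  rw [hd_eq_sum (r.insertNth a y) (r.insertNth b z), hd_eq_sum y z,
    Fin.sum_univ_succAbove _ r]
  simp

lemma sum_insertNth {n q : ℕ} (r : Fin (n + 1)) (F : (Fin (n + 1) → Fin q) → ℝ) :
    ∑ x : Fin (n + 1) → Fin q, F x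
      = ∑ a : Fin q, ∑ z : Fin n → Fin q, F (r.insertNth a z) := by
  rw [← (Fin.insertNthEquiv (fun _ => Fin q) r).sum_comp F, Fintype.sum_prod_type]
  rfl

/-- Key decomposition of the adjacency sum along a coordinate. -/
lemma adjSum_insertNth {n q : ℕ} (r : Fin (n + 1)) (k : Fin q)
    (f : (Fin (n + 1) → Fin q) → ℝ) (y : Fin n → Fin q) :
    adjSum (n + 1) q f (r.insertNth k y)
      = (∑ a : Fin q, if a = k then 0 else f (r.insertNth a y))
        + adjSum n q (fun z => f (r.insertNth k z)) y := by
  rw [adjSum, sum_insertNth r]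
  have : ∀ a : Fin q,
      (∑ z : Fin n → Fin q,
        if hammingDist (r.insertNth k y : Fin (n + 1) → Fin q) (r.insertNth a z) = 1
          then f (r.insertNth a z) else 0)
      = if a = k then adjSum n q (fun z => f (r.insertNth k z)) y
        else f (r.insertNth a y) := by
    intro a
    by_cases hak : a = k
    · subst hak
      simp only [if_pos rfl, adjSum]
      refine Finset.sum_congr rfl fun z _ => ?_
      rw [hd_insertNth, if_pos rfl, zero_add]
    · rw [if_neg hak]
      rw [Finset.sum_eq_single y]
      · rw [hd_insertNth, if_neg (Ne.symm hak), hammingDist_self]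
        norm_num
      · intro z _ hz
        rw [hd_insertNth, if_neg (Ne.symm hak), if_neg]
        intro h
        exact hz (hammingDist_eq_zero.mp (by omega)).symm
      · intro h; exact absurd (Finset.mem_univ y) h
  rw [Finset.sum_congr rfl fun a _ => this a]
  set A := adjSum n q (fun z => f (r.insertNth k z)) y with hA
  have split : (∑ a : Fin q, if a = k then A else f (r.insertNth a y))
      = (∑ a : Fin q, if a = k then A else 0)
        + ∑ a : Fin q, if a = k then 0 else f (r.insertNth a y) := by
    rw [← Finset.sum_add_distrib]
    exact Finset.sum_congr rfl fun a _ => by by_cases h : a = k <;> simp [h]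
  rw [split, Finset.sum_ite_eq' Finset.univ k (fun _ => A)]
  simp only [Finset.mem_univ, if_pos]
  rw [add_comm]

lemma adjSum_apply_linear {n q : ℕ} (f g : (Fin n → Fin q) → ℝ) (c d : ℝ) (x : Fin n → Fin q) :
    adjSum n q (fun y => c * f y + d * g y) x = c * adjSum n q f x + d * adjSum n q g x := by
  simp only [adjSum, Finset.mul_sum, ← Finset.sum_add_distrib]
  refine Finset.sum_congr rfl fun y _ => ?_
  by_cases h : hammingDist x y = 1 <;> simp [h]

/-- for f ∈ U_i(n+1,q), each restriction `f_k^r` lies in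
U_{i-1}(n,q) ⊕ U_i(n,q). -/
theorem restriction_memU_sum (n q i : ℕ) (f : (Fin (n + 1) → Fin q) → ℝ)
    (hf : memU (n + 1) q i f) (r : Fin (n + 1)) (k : Fin q) :
    ∃ g h : (Fin n → Fin q) → ℝ,
      IsEigenfun n q ((n : ℝ) * ((q : ℝ) - 1) - (q : ℝ) * ((i : ℝ) - 1)) g ∧
      memU n q i h ∧
      ∀ y, f (r.insertNth k y) = g y + h y := by
  have hq : (q : ℝ) ≠ 0 := Nat.cast_ne_zero.mpr k.pos.ne'
  set μ₁ : ℝ := (n : ℝ) * ((q : ℝ) - 1) - (q : ℝ) * ((i : ℝ) - 1) with hμ₁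
  set μ₂ : ℝ := (n : ℝ) * ((q : ℝ) - 1) - (q : ℝ) * (i : ℝ) with hμ₂
  set lam : ℝ := ((n : ℝ) + 1) * ((q : ℝ) - 1) - (q : ℝ) * (i : ℝ) with hlam
  -- restriction along value a
  set F : Fin q → (Fin n → Fin q) → ℝ := fun a z => f (r.insertNth a z) with hF
  set S : (Fin n → Fin q) → ℝ := fun z => ∑ a : Fin q, F a z with hS
  -- basic identity: adjSum of F a
  have key : ∀ (a : Fin q) (y : Fin n → Fin q),
      adjSum n q (F a) y = μ₁ * F a y - S y := by
    intro a y
    have h1 := adjSum_insertNth r a f y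
    have h2 : adjSum (n + 1) q f (r.insertNth a y) = lam * F a y := by
      have := hf (r.insertNth a y)
      simpa [hlam, Nat.cast_add, Nat.cast_one] using this
    have h3 : (∑ b : Fin q, if b = a then 0 else f (r.insertNth b y)) = S y - F a y := by
      have hSy : S y = ∑ b : Fin q, F b y := rfl
      rw [hSy]
      rw [show (∑ b : Fin q, F b y) = ∑ b : Fin q,
          ((if b = a then F a y else 0) + if b = a then 0 else f (r.insertNth b y)) from
        Finset.sum_congr rfl fun b _ => by by_cases h : b = a <;> simp [h, hF]]
      rw [Finset.sum_add_distrib, Finset.sum_ite_eq' Finset.univ a]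
      simp
    have : (S y - F a y) + adjSum n q (F a) y = lam * F a y := by
      rw [← h3, ← h1, h2]
    have hlm : lam = μ₁ - 1 := by rw [hlam, hμ₁]; ring
    rw [hlm] at this
    linarith
  -- S is an eigenfunction with eigenvalue μ₂
  have hSadj : ∀ y, adjSum n q S y = μ₂ * S y := by
    intro y
    have hswap : adjSum n q S y = ∑ a : Fin q, adjSum n q (F a) y := by
      simp only [adjSum, hS]
      rw [Finset.sum_comm]
      refine Finset.sum_congr rfl fun z _ => ?_
      by_cases h : hammingDist y z = 1 <;> simp [h]
    rw [hswap, Finset.sum_congr rfl fun a _ => key a y, Finset.sum_sub_distrib]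
    simp only [← Finset.mul_sum, ← hS, Finset.sum_const, Finset.card_univ, Fintype.card_fin,
      nsmul_eq_mul]
    have : μ₂ = μ₁ - q := by rw [hμ₁, hμ₂]; ring
    rw [this]; ring
  refine ⟨fun y => F k y - (1 / q) * S y, fun y => (1 / q) * S y, ?_, ?_, ?_⟩
  · intro y
    have : adjSum n q (fun z => F k z - (1 / q) * S z) y
        = 1 * adjSum n q (F k) y + (-(1 / q)) * adjSum n q S y := by
      rw [← adjSum_apply_linear]
      congr 1; ext z; ring
    rw [this, key k y, hSadj y]
    have h12 : μ₂ = μ₁ - q := by rw [hμ₁, hμ₂]; ring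
    rw [h12]
    field_simp
    ring
  · intro y
    have : adjSum n q (fun z => (1 / q) * S z) y
        = (1 / q) * adjSum n q S y + 0 * adjSum n q S y := by
      rw [← adjSum_apply_linear]
      congr 1; ext z; ring
    rw [this, hSadj y]
    ring
  · intro y; ring
end

section
/- For k, m ∈ Σ_q, the function a₁(k,m) on Σ_q² defined by a₁(k,m)(x,y) = 1 if x=k and y≠m, = -1 if y=m and x≠k, and = 0 otherwise, satisfies the eigenfunction equation for eigenvalue 2(q-1)-q = q-2 on the Hamming graph H(2,q), and its support has cardinality 2(q-1). -/
open Finset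

theorem hammingDist_fin_two_eq_one_iff {β : Type*} [DecidableEq β] (x y : Fin 2 → β) :
    hammingDist x y = 1 ↔ (x 0 ≠ y 0 ∧ x 1 = y 1) ∨ (x 0 = y 0 ∧ x 1 ≠ y 1) := by
  rw [hammingDist, card_filter, Fin.sum_univ_two]
  by_cases h0 : x 0 = y 0 <;> by_cases h1 : x 1 = y 1 <;> simp [h0, h1]

theorem adjSum_sub (n q : ℕ) (f g : (Fin n → Fin q) → ℝ) (x : Fin n → Fin q) :
    adjSum n q (fun y => f y - g y) x = adjSum n q f x - adjSum n q g x := by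
  simp only [adjSum, ← sum_sub_distrib, ite_sub_ite, sub_zero]

theorem adjSum_two (q : ℕ) (f : (Fin 2 → Fin q) → ℝ) (x : Fin 2 → Fin q) :
    adjSum 2 q f x =
      ∑ a ∈ univ.erase (x 0), f ![a, x 1] + ∑ b ∈ univ.erase (x 1), f ![x 0, b] := by
  rw [adjSum, ← (finTwoArrowEquiv _).symm.sum_comp, Fintype.sum_prod_type]
  simp only [finTwoArrowEquiv_symm_apply, hammingDist_fin_two_eq_one_iff,
    Matrix.cons_val_zero, Matrix.cons_val_one]
  have hsplit : ∀ a b, (if (x 0 ≠ a ∧ x 1 = b) ∨ (x 0 = a ∧ x 1 ≠ b) then f ![a, b] else 0) =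
      (if b = x 1 then if a ∈ univ.erase (x 0) then f ![a, b] else 0 else 0) +
        (if a = x 0 then if b ∈ univ.erase (x 1) then f ![a, b] else 0 else 0) := by
    intro a b
    by_cases h0 : a = x 0 <;> by_cases h1 : b = x 1 <;> simp [h0, h1, eq_comm]
  simp only [hsplit, sum_add_distrib, sum_ite_eq', mem_univ, if_true, sum_ite_irrel,
    sum_const_zero, sum_ite_mem, univ_inter]

theorem card_hammingDist_eq_one_fin_two (q : ℕ) (x : Fin 2 → Fin q) :
    #{y | hammingDist x y = 1} = 2 * (q - 1) := by
  have h : (#{y | hammingDist x y = 1} : ℝ) = adjSum 2 q (fun _ => 1) x := by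
    rw [adjSum, natCast_card_filter]
  rw [adjSum_two] at h
  simp only [sum_const, card_erase_of_mem (mem_univ _), card_univ, Fintype.card_fin,
    nsmul_eq_mul, mul_one] at h
  have hsum : #{y | hammingDist x y = 1} = (q - 1) + (q - 1) := by exact_mod_cast h
  omega

theorem adjSum_two_comp_eval (q : ℕ) (φ : Fin q → ℝ) (i : Fin 2) (x : Fin 2 → Fin q) :
    adjSum 2 q (fun y => φ (y i)) x = ∑ a, φ a + (q - 2) * φ (x i) := by
  have hq : ((q - 1 : ℕ) : ℝ) = q - 1 := by rw [Nat.cast_sub (Fin.pos (x i)), Nat.cast_one]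
  rw [adjSum_two]
  fin_cases i <;> simp [sum_erase_eq_sub, hq] <;> ring

theorem isEigenfun_two_sub_comp_eval (q : ℕ) (φ ψ : Fin q → ℝ) (h : ∑ a, φ a = ∑ a, ψ a) :
    IsEigenfun 2 q (q - 2) (fun x => φ (x 0) - ψ (x 1)) := by
  intro x
  rw [adjSum_sub, adjSum_two_comp_eval, adjSum_two_comp_eval, h]
  ring

def a1 (q : ℕ) (k m : Fin q) (x : Fin 2 → Fin q) : ℝ :=
  if x 0 = k ∧ x 1 ≠ m then 1 else if x 1 = m ∧ x 0 ≠ k then -1 else 0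

theorem a1_eq_sub (q : ℕ) (k m : Fin q) :
    a1 q k m = fun x => (if x 0 = k then 1 else 0) - (if x 1 = m then 1 else 0) := by
  ext x
  by_cases h0 : x 0 = k <;> by_cases h1 : x 1 = m <;> simp [a1, h0, h1]

theorem a1_ne_zero_iff (q : ℕ) (k m : Fin q) (x : Fin 2 → Fin q) :
    a1 q k m x ≠ 0 ↔ hammingDist ![k, m] x = 1 := by
  simp only [hammingDist_fin_two_eq_one_iff, Matrix.cons_val_zero, Matrix.cons_val_one]
  grind [a1]

theorem isEigenfun_a1 (q : ℕ) (k m : Fin q) : IsEigenfun 2 q (q - 2) (a1 q k m) := by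
  rw [a1_eq_sub]
  exact isEigenfun_two_sub_comp_eval q (fun a => if a = k then 1 else 0)
    (fun b => if b = m then 1 else 0) (by simp)

theorem suppCard_a1 (q : ℕ) (k m : Fin q) : suppCard 2 q (a1 q k m) = 2 * (q - 1) := by
  rw [suppCard, Nat.card_congr (Equiv.subtypeEquivRight (a1_ne_zero_iff q k m)),
    Nat.card_eq_fintype_card, Fintype.card_subtype, card_hammingDist_eq_one_fin_two]

/-- `a₁(k,m)` is an eigenfunction of H(2,q) for eigenvalue `q - 2`,
with support of cardinality `2(q-1)`. -/
theorem a1_eigenfun_and_support (q : ℕ) (k m : Fin q) :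
    IsEigenfun 2 q ((q : ℝ) - 2)
      (fun x : Fin 2 → Fin q =>
        if x 0 = k ∧ x 1 ≠ m then (1 : ℝ)
        else if x 1 = m ∧ x 0 ≠ k then -1 else 0) ∧
    suppCard 2 q
      (fun x : Fin 2 → Fin q =>
        if x 0 = k ∧ x 1 ≠ m then (1 : ℝ)
        else if x 1 = m ∧ x 0 ≠ k then -1 else 0) = 2 * (q - 1) :=
  ⟨isEigenfun_a1 q k m, suppCard_a1 q k m⟩
end

section
/- Let q ≥ 3, i ≤ ⌊n/2⌋, and let f be a nonzero eigenfunction of the Hamming graph H(n,q) for eigenvalue n(q-1)-qi. Then f is nonzero on at least 2^i (q-1)^i q^{n-2i} vertices, and this bound is attained. -/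
/-!
Restrict `f : Σ_q^{n+1} → ℝ` to the `q` hyperplanes `x_r = a`. The adjacency operator of `H(n+1,q)`
acts on a slice as that of `H(n,q)` plus the complete graph `K_q` across the slices, so for
`f ∈ U_{[i,j]}(n+1)` every slice lies in `U_{[i-1,j]}(n)`, differences of slices in
`U_{[i-1,j-1]}(n)` and the sum of all slices in `U_{[i,j]}(n)`. The bound
`2^i (q-1)^i q^(n-i-j)` for nonzero `f ∈ U_{[i,j]}(n)` is proved by induction on `n`.
For `i ≥ 1`, `f` is not constant (constants lie in `U_0`), so some coordinate `r` has two distinct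
slices. With `B` the bound for slices, a nonzero slice has support at least `B` and two distinct
slices have supports adding up to at least `qB`; counting gives `2(q-1)B` unless only one slice
`w` is nonzero. Then `w` is also the sum of the slices and a difference of two slices, so it lies
in `U_{[i,j]} ∩ U_{[i-1,j-1]} = U_{[i,j-1]}` by independence of eigenspaces, and the induction
hypothesis applies to `w` itself.
-/

open Finset Module.End

lemma hammingDist_insertNth {n : ℕ} {β : Type*} [DecidableEq β] (r : Fin (n + 1)) (a b : β)
    (x y : Fin n → β) :
    hammingDist (Fin.insertNth (α := fun _ => β) r a x) (Fin.insertNth (α := fun _ => β) r b y)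
      = hammingDist x y + if a = b then 0 else 1 := by
  simp only [hammingDist, card_filter, Fin.sum_univ_succAbove _ r, Fin.insertNth_apply_same,
    Fin.insertNth_apply_succAbove]
  split_ifs <;> simp_all [add_comm]

lemma eq_of_forall_update_eq {ι β γ : Type*} [Fintype ι] [DecidableEq ι] {g : (ι → β) → γ}
    (h : ∀ x k c, g (Function.update x k c) = g x) (x y : ι → β) : g y = g x := by
  have key : ∀ s : Finset ι, g (s.piecewise y x) = g x := by
    intro s
    induction s using Finset.induction_on with
    | empty => simp
    | insert k s _ ih => rw [Finset.piecewise_insert, h, ih]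
  simpa using key univ

lemma iSupIndep.biSup_inf_biSup_le {ι α : Type*} [CompleteLattice α] [IsModularLattice α]
    {p : ι → α} (hp : iSupIndep p) {s t : Set ι} (hs : s.Finite) :
    (⨆ i ∈ s, p i) ⊓ (⨆ i ∈ t, p i) ≤ ⨆ i ∈ s ∩ t, p i := by
  have hsplit : (⨆ i ∈ s, p i) = (⨆ i ∈ s ∩ t, p i) ⊔ ⨆ i ∈ s \ t, p i := by
    rw [← _root_.iSup_union, Set.inter_union_sdiff]
  rw [hsplit, sup_inf_assoc_of_le _ (biSup_mono fun i hi => hi.2),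
    (hp.disjoint_biSup_biSup' Set.disjoint_sdiff_left hs.sdiff).eq_bot, sup_bot_eq]

lemma Submodule.apply_mem_of_mem_biSup {R M N ι : Type*} [Semiring R] [AddCommMonoid M]
    [AddCommMonoid N] [Module R M] [Module R N] {p : ι → Submodule R M} {s : Set ι}
    (φ : M →ₗ[R] N) (W : Submodule R N) (h : ∀ t ∈ s, ∀ x ∈ p t, φ x ∈ W) {x : M}
    (hx : x ∈ ⨆ t ∈ s, p t) : φ x ∈ W :=
  (iSup₂_le fun t ht y hy => h t ht y hy : (⨆ t ∈ s, p t) ≤ W.comap φ) hx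

lemma two_mul_sub_one_mul_le {q k m B S : ℕ} (hk1 : 1 ≤ k) (hkq : k < q)
    (hS : k * (q * B) + (q - k) * m ≤ S + k * m) (hqm : q * m ≤ S) (h : 2 ≤ k ∨ B ≤ m) :
    2 * (q - 1) * B ≤ S := by
  -- `S ≥ kqB + (q - 2k)m` and `S ≥ qm`, split by the signs of `q - 2k` and `qB - 2m`;
  -- the remaining slack is `q² ≥ 4(q - 1)`
  zify [hkq.le, (by omega : 1 ≤ q)] at *
  have hB : (0 : ℤ) ≤ B := by positivity
  have hm : (0 : ℤ) ≤ m := by positivity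
  rcases le_or_gt (2 * (k : ℤ)) q with hk | hk
  · rcases h with h | h
    · nlinarith [mul_nonneg (sub_nonneg.mpr hk) hm, mul_nonneg (mul_nonneg (sub_nonneg.mpr h)
        (by linarith : (0 : ℤ) ≤ q)) hB]
    · nlinarith [mul_nonneg (sub_nonneg.mpr hk) (sub_nonneg.mpr h),
        mul_nonneg (mul_nonneg (sub_nonneg.mpr hk1) (by linarith : (0 : ℤ) ≤ q - 2)) hB]
  · rcases le_or_gt (2 * (m : ℤ)) (q * B) with hm' | hm'
    · nlinarith [mul_nonneg (by linarith : (0 : ℤ) ≤ 2 * k - q) (sub_nonneg.mpr hm'),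
        mul_nonneg (sq_nonneg ((q : ℤ) - 2)) hB]
    · nlinarith [mul_nonneg (by linarith : (0 : ℤ) ≤ q) (by linarith : (0 : ℤ) ≤ 2 * m - q * B),
        mul_nonneg (sq_nonneg ((q : ℤ) - 2)) hB]

lemma two_mul_card_sub_one_mul_le_sum_or {ι V : Type*} [Fintype ι] [DecidableEq V] [Zero V]
    {v : ι → V} {s : ι → ℕ} {B : ℕ}
    (hne : ∀ a b, v a ≠ v b → Fintype.card ι * B ≤ s a + s b)
    (hpos : ∀ a, v a ≠ 0 → B ≤ s a) {a b : ι} (hab : v a ≠ v b) :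
    2 * (Fintype.card ι - 1) * B ≤ ∑ c, s c ∨ ∃ c₀, ∀ c ≠ c₀, v c = 0 := by
  -- every `c` with `v c ≠ v a₀` has `s c ≥ |ι| B - s a₀`, where `s a₀` is the least value of `s`
  obtain ⟨a₀, -, hmin⟩ := exists_min_image univ s ⟨a, mem_univ a⟩
  set D := univ.filter fun c => v c ≠ v a₀
  set E := univ.filter fun c => ¬ v c ≠ v a₀
  have hk1 : 1 ≤ #D := card_pos.mpr <| by
    by_cases ha : v a = v a₀
    · exact ⟨b, by simpa [D, ← ha] using hab.symm⟩
    · exact ⟨a, by simpa [D] using ha⟩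
  have hkq : #D < Fintype.card ι :=
    card_lt_card (filter_ssubset.mpr ⟨a₀, mem_univ _, by simp⟩)
  have hE : #E = Fintype.card ι - #D := by
    have : #D + #E = Fintype.card ι := card_filter_add_card_filter_not _
    omega
  have hD : #D * (Fintype.card ι * B) ≤ ∑ c ∈ D, s c + #D * s a₀ := by
    have := card_nsmul_le_sum D (fun c => s c + s a₀) _ fun c hc => hne c a₀ (mem_filter.mp hc).2
    simpa [sum_add_distrib] using this
  have hDc : #E * s a₀ ≤ ∑ c ∈ E, s c := by
    simpa using card_nsmul_le_sum E s _ fun c _ => hmin c (mem_univ c)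
  have hqm : Fintype.card ι * s a₀ ≤ ∑ c, s c := by
    simpa using card_nsmul_le_sum univ s _ fun c _ => hmin c (mem_univ c)
  rw [← sum_filter_add_sum_filter_not univ (fun c => v c ≠ v a₀)] at hqm ⊢
  by_cases hsmall : s a₀ < B ∧ #D = 1
  · right
    obtain ⟨c₀, hc₀⟩ := card_eq_one.mp hsmall.2
    have hv₀ : v a₀ = 0 := by_contra fun h => absurd (hpos a₀ h) (not_le.mpr hsmall.1)
    refine ⟨c₀, fun c hc => ?_⟩
    by_contra h
    have : c ∈ D := by simp [D, hv₀, h]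
    simp [hc₀, hc] at this
  · left
    rw [hE] at hDc
    exact two_mul_sub_one_mul_le hk1 hkq (by linarith) hqm (by omega)

namespace HammingGraph

section Slices

variable {n q : ℕ}

noncomputable def adjacency (n q : ℕ) : Module.End ℝ ((Fin n → Fin q) → ℝ) where
  toFun := adjSum n q
  map_add' f g := by ext x; simp [adjSum, ← sum_add_distrib, ite_add_ite]
  map_smul' c f := by ext x; simp [adjSum, mul_sum]

lemma adjacency_apply (f : (Fin n → Fin q) → ℝ) (x : Fin n → Fin q) :
    adjacency n q f x = ∑ y, if hammingDist x y = 1 then f y else 0 := rfl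

lemma adjacency_zero : adjacency 0 q = 0 := by
  ext f x
  simp [adjacency_apply, hammingDist]

def sliceAt (r : Fin (n + 1)) (a : Fin q) :
    ((Fin (n + 1) → Fin q) → ℝ) →ₗ[ℝ] (Fin n → Fin q) → ℝ :=
  LinearMap.funLeft ℝ ℝ (Fin.insertNth (α := fun _ => Fin q) r a)

lemma sliceAt_apply (r : Fin (n + 1)) (a : Fin q) (f : (Fin (n + 1) → Fin q) → ℝ)
    (x : Fin n → Fin q) : sliceAt r a f x = f (Fin.insertNth (α := fun _ => Fin q) r a x) := rfl

lemma sliceAt_const (r : Fin (n + 1)) (a : Fin q) (c : ℝ) :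
    sliceAt r a (fun _ => c) = fun _ => c := rfl

def sliceSum (r : Fin (n + 1)) : ((Fin (n + 1) → Fin q) → ℝ) →ₗ[ℝ] (Fin n → Fin q) → ℝ :=
  ∑ a, sliceAt r a

lemma sliceAt_ext {r : Fin (n + 1)} {f g : (Fin (n + 1) → Fin q) → ℝ}
    (h : ∀ a, sliceAt r a f = sliceAt r a g) : f = g := by
  ext x
  rw [← Fin.insertNth_self_removeNth r x]
  exact congrFun (h (x r)) _

lemma sliceAt_adjacency (r : Fin (n + 1)) (a : Fin q) (f : (Fin (n + 1) → Fin q) → ℝ) :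
    sliceAt r a (adjacency (n + 1) q f)
      = adjacency n q (sliceAt r a f) + sliceSum r f - sliceAt r a f := by
  ext x
  rw [sliceAt_apply, adjacency_apply, ← (Fin.insertNthEquiv (fun _ => Fin q) r).sum_comp,
    Fintype.sum_prod_type]
  simp only [Fin.insertNthEquiv, Equiv.coe_fn_mk, hammingDist_insertNth]
  -- the neighbours of `insertNth r a x` are `insertNth r a y` with `y ~ x` and `insertNth r b x`
  -- with `b ≠ a`
  have inner : ∀ b, (∑ y : Fin n → Fin q, if hammingDist x y + (if a = b then 0 else 1) = 1 then
      f (Fin.insertNth (α := fun _ => Fin q) r b y) else 0)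
      = if a = b then adjacency n q (sliceAt r a f) x else sliceAt r b f x := by
    intro b
    split_ifs with hab
    · subst hab; simp [adjacency_apply, sliceAt_apply]
    · simp [hammingDist_eq_zero, sliceAt_apply, eq_comm (a := x)]
  simp only [inner, sliceSum, LinearMap.sum_apply, Finset.sum_apply, Pi.add_apply, Pi.sub_apply]
  rw [← add_sum_erase _ _ (mem_univ a), if_pos rfl,
    sum_ite_of_false (fun b hb => (ne_of_mem_erase hb).symm), ← sum_erase_add _ _ (mem_univ a)]
  ring

end Slices

section Eigenspaces

variable {n q : ℕ} {μ : ℝ} {f : (Fin (n + 1) → Fin q) → ℝ}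

lemma adjacency_sliceAt (hf : f ∈ (adjacency (n + 1) q).eigenspace μ) (r : Fin (n + 1))
    (a : Fin q) :
    adjacency n q (sliceAt r a f) = (μ + 1) • sliceAt r a f - sliceSum r f := by
  have h := sliceAt_adjacency r a f
  rw [mem_eigenspace_iff.mp hf, map_smul] at h
  linear_combination (norm := module) -h

lemma sliceSum_mem_eigenspace (hf : f ∈ (adjacency (n + 1) q).eigenspace μ) (r : Fin (n + 1)) :
    sliceSum r f ∈ (adjacency n q).eigenspace (μ + 1 - q) := by
  rw [mem_eigenspace_iff]
  have hS : sliceSum r f = ∑ a, sliceAt r a f := LinearMap.sum_apply _ _ _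
  simp only [hS, map_sum, adjacency_sliceAt hf, sum_sub_distrib, sum_const, card_univ,
    Fintype.card_fin, ← smul_sum]
  module

lemma sliceAt_sub_mem_eigenspace (hf : f ∈ (adjacency (n + 1) q).eigenspace μ)
    (r : Fin (n + 1)) (a b : Fin q) :
    sliceAt r a f - sliceAt r b f ∈ (adjacency n q).eigenspace (μ + 1) := by
  rw [mem_eigenspace_iff, map_sub, adjacency_sliceAt hf, adjacency_sliceAt hf]
  module

lemma eigenspace_adjacency_eq_bot_of_lt : ∀ {n : ℕ} {μ : ℝ}, n * ((q : ℝ) - 1) < μ →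
    (adjacency n q).eigenspace μ = ⊥
  | 0, μ, hμ => by
    rw [Submodule.eq_bot_iff]
    intro f hf
    rw [mem_eigenspace_iff, adjacency_zero] at hf
    simp at hμ
    simpa [hμ.ne'] using hf.symm
  | n + 1, μ, hμ => by
    rw [Submodule.eq_bot_iff]
    intro f hf
    have hS : sliceSum 0 f = 0 := by
      have := sliceSum_mem_eigenspace hf 0
      rwa [eigenspace_adjacency_eq_bot_of_lt (by push_cast at hμ; linarith)] at this
    refine sliceAt_ext (r := 0) fun a => ?_
    have ha : sliceAt 0 a f ∈ (adjacency n q).eigenspace (μ + 1) := by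
      rw [mem_eigenspace_iff, adjacency_sliceAt hf, hS, sub_zero]
    have hq : (1 : ℝ) ≤ q := by exact_mod_cast a.pos
    rwa [eigenspace_adjacency_eq_bot_of_lt (by push_cast at hμ; nlinarith), Submodule.mem_bot,
      ← map_zero (sliceAt 0 a)] at ha

end Eigenspaces

section EigenvalueIndex

variable {n q : ℕ}

def eigenvalue (n q t : ℕ) : ℝ := n * ((q : ℝ) - 1) - q * t

noncomputable def eigenU (n q t : ℕ) : Submodule ℝ ((Fin n → Fin q) → ℝ) :=
  (adjacency n q).eigenspace (eigenvalue n q t)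

noncomputable def eigenSum (n q i j : ℕ) : Submodule ℝ ((Fin n → Fin q) → ℝ) :=
  ⨆ t ∈ Set.Icc i j, eigenU n q t

lemma mem_eigenU_iff {t : ℕ} {f : (Fin n → Fin q) → ℝ} : f ∈ eigenU n q t ↔ memU n q t f := by
  rw [eigenU, mem_eigenspace_iff, funext_iff]
  rfl

lemma eigenvalue_succ_add_one_sub (t : ℕ) :
    eigenvalue (n + 1) q t + 1 - q = eigenvalue n q t := by
  simp only [eigenvalue]; push_cast; ring

lemma eigenvalue_succ_succ_add_one (t : ℕ) :
    eigenvalue (n + 1) q (t + 1) + 1 = eigenvalue n q t := by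
  simp only [eigenvalue]; push_cast; ring

lemma eigenU_le_eigenSum {i j t : ℕ} (hi : i ≤ t) (hj : t ≤ j) :
    eigenU n q t ≤ eigenSum n q i j :=
  le_biSup (eigenU n q) (Set.mem_Icc.mpr ⟨hi, hj⟩)

lemma eigenU_iSupIndep (hq : 0 < q) : iSupIndep (eigenU n q) :=
  (eigenspaces_iSupIndep (adjacency n q)).comp fun t t' h => by
    have : (q : ℝ) * t = q * t' := by simpa [eigenvalue] using h
    exact_mod_cast mul_left_cancel₀ (by positivity) this

lemma le_of_mem_eigenSum {i j : ℕ} {f : (Fin n → Fin q) → ℝ} (hf : f ∈ eigenSum n q i j)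
    (hf0 : f ≠ 0) : i ≤ j := by
  by_contra! h
  rw [eigenSum, Set.Icc_eq_empty_of_lt h, iSup_emptyset, Submodule.mem_bot] at hf
  exact hf0 hf

lemma eigenSum_inf_eigenSum_le (hq : 0 < q) {i j : ℕ} (hi : 1 ≤ i) :
    eigenSum n q i j ⊓ eigenSum n q (i - 1) (j - 1) ≤ eigenSum n q i (j - 1) := by
  have hIcc : Set.Icc i j ∩ Set.Icc (i - 1) (j - 1) = Set.Icc i (j - 1) := by
    ext t
    simp only [Set.mem_inter_iff, Set.mem_Icc]
    omega
  have := (eigenU_iSupIndep (n := n) hq).biSup_inf_biSup_le (Set.finite_Icc i j)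
    (t := Set.Icc (i - 1) (j - 1))
  rwa [hIcc] at this

lemma disjoint_eigenU_zero_eigenSum (hq : 0 < q) {i j : ℕ} (hi : 1 ≤ i) :
    Disjoint (eigenU n q 0) (eigenSum n q i j) :=
  (eigenU_iSupIndep hq).disjoint_biSup fun h => by rw [Set.mem_Icc] at h; omega

lemma const_mem_eigenU_zero (c : ℝ) : ∀ {n : ℕ}, (fun _ => c : (Fin n → Fin q) → ℝ) ∈ eigenU n q 0
  | 0 => by simp [eigenU, adjacency_zero, eigenvalue]
  | n + 1 => by
    have ih := mem_eigenspace_iff.mp (const_mem_eigenU_zero c (n := n))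
    rw [eigenU, mem_eigenspace_iff]
    refine sliceAt_ext (r := 0) fun a => ?_
    rw [sliceAt_adjacency, map_smul, sliceAt_const, ih, sliceSum, LinearMap.sum_apply]
    simp only [sliceAt_const, sum_const, card_univ, Fintype.card_fin, eigenvalue]
    rw [← Nat.cast_smul_eq_nsmul ℝ]
    push_cast
    module

end EigenvalueIndex

section SliceMembership

variable {n q i j : ℕ} {f : (Fin (n + 1) → Fin q) → ℝ}

lemma sliceAt_eq_of_mem_eigenU_zero (hf : f ∈ eigenU (n + 1) q 0) (r : Fin (n + 1))
    (a b : Fin q) : sliceAt r a f = sliceAt r b f := by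
  have h := sliceAt_sub_mem_eigenspace hf r a b
  have hq : (1 : ℝ) ≤ q := by exact_mod_cast a.pos
  rwa [eigenspace_adjacency_eq_bot_of_lt (by simp only [eigenvalue]; push_cast; nlinarith),
    Submodule.mem_bot, sub_eq_zero] at h

lemma sliceAt_sub_mem_eigenU {t : ℕ} (hf : f ∈ eigenU (n + 1) q t) (r : Fin (n + 1))
    (a b : Fin q) : sliceAt r a f - sliceAt r b f ∈ eigenU n q (t - 1) := by
  cases t with
  | zero => simp [sliceAt_eq_of_mem_eigenU_zero hf r a b]
  | succ t =>
    have h := sliceAt_sub_mem_eigenspace hf r a b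
    rwa [eigenvalue_succ_succ_add_one] at h

lemma sliceSum_mem_eigenU {t : ℕ} (hf : f ∈ eigenU (n + 1) q t) (r : Fin (n + 1)) :
    sliceSum r f ∈ eigenU n q t := by
  have h := sliceSum_mem_eigenspace hf r
  rwa [eigenvalue_succ_add_one_sub] at h

lemma sliceSum_mem_eigenSum (hf : f ∈ eigenSum (n + 1) q i j) (r : Fin (n + 1)) :
    sliceSum r f ∈ eigenSum n q i j :=
  Submodule.apply_mem_of_mem_biSup (sliceSum r) _
    (fun _ ht _ hx => eigenU_le_eigenSum ht.1 ht.2 (sliceSum_mem_eigenU hx r)) hf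

lemma sliceAt_sub_mem_eigenSum (hf : f ∈ eigenSum (n + 1) q i j) (r : Fin (n + 1))
    (a b : Fin q) : sliceAt r a f - sliceAt r b f ∈ eigenSum n q (i - 1) (j - 1) :=
  Submodule.apply_mem_of_mem_biSup (sliceAt r a - sliceAt r b) (eigenSum n q (i - 1) (j - 1))
    (fun _ ht _ hx => by
      obtain ⟨hit, htj⟩ := ht
      exact eigenU_le_eigenSum (by omega) (by omega) (sliceAt_sub_mem_eigenU hx r a b))
    hf

lemma sliceAt_eq_of_mem_eigenSum_zero (hf : f ∈ eigenSum (n + 1) q i 0) (r : Fin (n + 1))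
    (a b : Fin q) : sliceAt r a f = sliceAt r b f := by
  refine sub_eq_zero.mp (Submodule.apply_mem_of_mem_biSup (sliceAt r a - sliceAt r b) ⊥
    (fun t ht x hx => ?_) hf)
  obtain rfl : t = 0 := by simpa using ht.2
  simp [sliceAt_eq_of_mem_eigenU_zero hx r a b]

lemma sliceAt_mem_eigenSum (hf : f ∈ eigenSum (n + 1) q i j) (r : Fin (n + 1)) (a : Fin q) :
    sliceAt r a f ∈ eigenSum n q (i - 1) j := by
  refine Submodule.apply_mem_of_mem_biSup (sliceAt r a) (eigenSum n q (i - 1) j)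
    (fun t ht x hx => ?_) hf
  obtain ⟨hit, htj⟩ := ht
  have hq : (q : ℝ) ≠ 0 := by exact_mod_cast a.pos.ne'
  -- `q • x_a = ∑_b (x_a - x_b) + ∑_b x_b` splits the slice into eigencomponents `t - 1` and `t`
  have hsplit : sliceAt r a x
      = (q : ℝ)⁻¹ • (∑ b, (sliceAt r a x - sliceAt r b x) + sliceSum r x) := by
    rw [sum_sub_distrib, sum_const, card_univ, Fintype.card_fin, sliceSum, LinearMap.sum_apply,
      sub_add_cancel, ← Nat.cast_smul_eq_nsmul ℝ q, smul_smul, inv_mul_cancel₀ hq, one_smul]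
  rw [hsplit]
  refine Submodule.smul_mem _ _ (add_mem (sum_mem fun b _ => ?_) ?_)
  · exact eigenU_le_eigenSum (by omega) (by omega) (sliceAt_sub_mem_eigenU hx r a b)
  · exact eigenU_le_eigenSum (by omega) htj (sliceSum_mem_eigenU hx r)

lemma exists_sliceAt_ne (hq : 0 < q) (hi : 1 ≤ i) (hf : f ∈ eigenSum (n + 1) q i j)
    (hf0 : f ≠ 0) : ∃ r a b, sliceAt r a f ≠ sliceAt r b f := by
  by_contra! h
  have hconst : ∀ x y, f y = f x := eq_of_forall_update_eq fun x k c => by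
    rw [← Fin.insertNth_removeNth, ← sliceAt_apply k c f, h k c (x k), sliceAt_apply,
      Fin.insertNth_self_removeNth]
  have hf' : f ∈ eigenU (n + 1) q 0 := by
    rw [show f = fun _ => f fun _ => ⟨0, hq⟩ from funext (hconst _)]
    exact const_mem_eigenU_zero _
  exact hf0 (Submodule.disjoint_def.mp (disjoint_eigenU_zero_eigenSum hq hi) f hf' hf)

end SliceMembership

section Support

variable {n q : ℕ}

lemma suppCard_eq_ncard (f : (Fin n → Fin q) → ℝ) : suppCard n q f = (Function.support f).ncard :=
  rfl

lemma suppCard_eq_sum_sliceAt (r : Fin (n + 1)) (f : (Fin (n + 1) → Fin q) → ℝ) :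
    suppCard (n + 1) q f = ∑ a, suppCard n q (sliceAt r a f) := by
  simp only [suppCard, Nat.card_eq_fintype_card, Fintype.card_subtype, card_filter,
    ← (Fin.insertNthEquiv (fun _ => Fin q) r).sum_comp, Fintype.sum_prod_type]
  rfl

lemma suppCard_pos {f : (Fin n → Fin q) → ℝ} (hf : f ≠ 0) : 0 < suppCard n q f :=
  (Set.ncard_pos (Set.toFinite _)).mpr (Function.support_nonempty_iff.mpr hf)

lemma suppCard_sub_le (f g : (Fin n → Fin q) → ℝ) :
    suppCard n q (f - g) ≤ suppCard n q f + suppCard n q g :=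
  (Set.ncard_le_ncard (Function.support_sub f g) (Set.toFinite _)).trans (Set.ncard_union_le _ _)

lemma suppCard_smul (c : ℝ) (f : (Fin n → Fin q) → ℝ) :
    suppCard n q (c • f) = if c = 0 then 0 else suppCard n q f := by
  split_ifs with hc
  · simp [hc, suppCard_eq_ncard]
  · rw [suppCard_eq_ncard, Function.support_const_smul_of_ne_zero _ _ hc, suppCard_eq_ncard]

lemma suppCard_const {c : ℝ} (hc : c ≠ 0) : suppCard n q (fun _ => c) = q ^ n := by
  simp [suppCard_eq_ncard, Function.support_const hc, Set.ncard_univ]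

end Support

def SupportBound (n q : ℕ) : Prop :=
  ∀ i j, i + j ≤ n → ∀ f ∈ eigenSum n q i j, f ≠ 0 →
    2 ^ i * (q - 1) ^ i * q ^ (n - i - j) ≤ suppCard n q f

namespace SupportBound

variable {m q i j : ℕ} {f : (Fin (m + 1) → Fin q) → ℝ}

lemma zero : SupportBound 0 q := fun i j hij f _ hf0 => by
  obtain ⟨rfl, rfl⟩ : i = 0 ∧ j = 0 := by omega
  simpa using Nat.one_le_iff_ne_zero.mpr (suppCard_pos hf0).ne'

lemma le_suppCard_succ_zero (IH : SupportBound m q) (hj : j ≤ m + 1)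
    (hf : f ∈ eigenSum (m + 1) q 0 j) (hf0 : f ≠ 0) : q ^ (m + 1 - j) ≤ suppCard (m + 1) q f := by
  rcases hj.eq_or_lt with rfl | hj
  · simpa using Nat.one_le_iff_ne_zero.mpr (suppCard_pos hf0).ne'
  rw [suppCard_eq_sum_sliceAt 0]
  by_cases hall : ∀ a, sliceAt 0 a f ≠ 0
  · calc q ^ (m + 1 - j) = ∑ _a : Fin q, q ^ (m - j) := by
          rw [sum_const, card_univ, Fintype.card_fin, smul_eq_mul, ← pow_succ',
            Nat.sub_add_comm (by omega)]
      _ ≤ _ := sum_le_sum fun a _ => by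
          simpa using IH 0 j (by omega) _ (sliceAt_mem_eigenSum hf 0 a) (hall a)
  obtain ⟨a₀, ha₀⟩ : ∃ a₀, sliceAt 0 a₀ f = 0 := by simpa using hall
  obtain ⟨b, hb⟩ : ∃ b, sliceAt 0 b f ≠ 0 := by
    by_contra! h
    exact hf0 (sliceAt_ext fun a => by rw [h a, map_zero])
  obtain ⟨j, rfl⟩ : ∃ j', j = j' + 1 := by
    cases j with
    | zero => exact absurd (ha₀ ▸ sliceAt_eq_of_mem_eigenSum_zero hf 0 b a₀) hb
    | succ j => exact ⟨j, rfl⟩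
  have hdiff := sliceAt_sub_mem_eigenSum hf 0 b a₀
  rw [ha₀, sub_zero] at hdiff
  calc q ^ (m + 1 - (j + 1)) ≤ suppCard m q (sliceAt 0 b f) := by
        simpa using IH 0 j (by omega) _ hdiff hb
    _ ≤ _ := single_le_sum (f := fun a => suppCard m q (sliceAt 0 a f))
          (fun _ _ => Nat.zero_le _) (mem_univ b)

lemma le_suppCard_sliceAt (hq : 0 < q) (IH : SupportBound m q) (hij : i + 1 + j ≤ m + 1)
    (hf : f ∈ eigenSum (m + 1) q (i + 1) j) {r : Fin (m + 1)} {c₀ c : Fin q} (hc : c ≠ c₀)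
    (hc₀ : ∀ c ≠ c₀, sliceAt r c f = 0) (hf0 : f ≠ 0) :
    2 ^ (i + 1) * (q - 1) ^ (i + 1) * q ^ (m - i - j) ≤ suppCard m q (sliceAt r c₀ f) := by
  have hw0 : sliceAt r c₀ f ≠ 0 := fun h => hf0 <| sliceAt_ext fun c => by
    rcases eq_or_ne c c₀ with rfl | hc
    · rw [h, map_zero]
    · rw [hc₀ c hc, map_zero]
  have hw1 : sliceAt r c₀ f ∈ eigenSum m q (i + 1) j := by
    have hS : sliceSum r f = sliceAt r c₀ f := by
      rw [sliceSum, LinearMap.sum_apply]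
      exact sum_eq_single c₀ (fun c _ hc => hc₀ c hc) (by simp)
    exact hS ▸ sliceSum_mem_eigenSum hf r
  have hw2 : sliceAt r c₀ f ∈ eigenSum m q i (j - 1) := by
    simpa [hc₀ c hc] using sliceAt_sub_mem_eigenSum hf r c₀ c
  have hw : sliceAt r c₀ f ∈ eigenSum m q (i + 1) (j - 1) :=
    eigenSum_inf_eigenSum_le hq (by omega) ⟨hw1, hw2⟩
  have hij' := le_of_mem_eigenSum hw hw0
  simpa [show m - (i + 1) - (j - 1) = m - i - j by omega] using
    IH (i + 1) (j - 1) (by omega) _ hw hw0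

lemma le_suppCard_succ_succ (hq : 0 < q) (IH : SupportBound m q) (hij : i + 1 + j ≤ m + 1)
    (hf : f ∈ eigenSum (m + 1) q (i + 1) j) (hf0 : f ≠ 0) :
    2 ^ (i + 1) * (q - 1) ^ (i + 1) * q ^ (m + 1 - (i + 1) - j) ≤ suppCard (m + 1) q f := by
  have hj := le_of_mem_eigenSum hf hf0
  obtain ⟨r, a, b, hab⟩ := exists_sliceAt_ne hq (by omega) hf hf0
  have hB : 2 ^ (i + 1) * (q - 1) ^ (i + 1) * q ^ (m + 1 - (i + 1) - j)
      = 2 * (Fintype.card (Fin q) - 1) * (2 ^ i * (q - 1) ^ i * q ^ (m - i - j)) := by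
    rw [Fintype.card_fin, show m + 1 - (i + 1) - j = m - i - j by omega]
    ring
  rw [suppCard_eq_sum_sliceAt r, hB]
  refine (two_mul_card_sub_one_mul_le_sum_or (v := fun a => sliceAt r a f)
    (fun a b hab => ?_) (fun a ha => IH i j (by omega) _ (sliceAt_mem_eigenSum hf r a) ha)
    hab).elim id fun ⟨c₀, hc₀⟩ => ?_
  · calc Fintype.card (Fin q) * (2 ^ i * (q - 1) ^ i * q ^ (m - i - j))
          = 2 ^ i * (q - 1) ^ i * q ^ (m - i - (j - 1)) := by
            rw [Fintype.card_fin, show m - i - (j - 1) = m - i - j + 1 by omega, pow_succ]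
            ring
      _ ≤ suppCard m q (sliceAt r a f - sliceAt r b f) :=
          IH i (j - 1) (by omega) _ (sliceAt_sub_mem_eigenSum hf r a b) (sub_ne_zero.mpr hab)
      _ ≤ _ := suppCard_sub_le _ _
  · obtain ⟨c, hc⟩ : ∃ c, c ≠ c₀ := by
      by_cases ha : a = c₀
      · exact ⟨b, fun hb => hab (by rw [ha, hb])⟩
      · exact ⟨a, ha⟩
    calc 2 * (Fintype.card (Fin q) - 1) * (2 ^ i * (q - 1) ^ i * q ^ (m - i - j))
        = 2 ^ (i + 1) * (q - 1) ^ (i + 1) * q ^ (m - i - j) := by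
          rw [Fintype.card_fin]
          ring
      _ ≤ suppCard m q (sliceAt r c₀ f) := le_suppCard_sliceAt hq IH hij hf hc hc₀ hf0
      _ ≤ _ := single_le_sum (f := fun a => suppCard m q (sliceAt r a f))
          (fun _ _ => Nat.zero_le _) (mem_univ c₀)

end SupportBound

theorem supportBound {q : ℕ} (hq : 0 < q) : ∀ n, SupportBound n q
  | 0 => .zero
  | m + 1 => fun i j hij f hf hf0 => by
    cases i with
    | zero => simpa using (supportBound hq m).le_suppCard_succ_zero (by omega) hf hf0
    | succ i => exact (supportBound hq m).le_suppCard_succ_succ hq hij hf hf0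

section Attainment

variable {n q : ℕ}

def extendAt (r : Fin (n + 1)) (h : (Fin n → Fin q) → ℝ) (φ : Fin q → ℝ) :
    (Fin (n + 1) → Fin q) → ℝ :=
  fun x => φ (x r) * h (r.removeNth x)

lemma sliceAt_extendAt (r : Fin (n + 1)) (h : (Fin n → Fin q) → ℝ) (φ : Fin q → ℝ) (a : Fin q) :
    sliceAt r a (extendAt r h φ) = φ a • h := by
  ext x
  simp [sliceAt_apply, extendAt]

lemma extendAt_mem_eigenspace {μ c : ℝ} {h : (Fin n → Fin q) → ℝ}
    (hh : h ∈ (adjacency n q).eigenspace μ) {φ : Fin q → ℝ} (hφ : ∀ a, ∑ b, φ b - φ a = c * φ a)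
    (r : Fin (n + 1)) : extendAt r h φ ∈ (adjacency (n + 1) q).eigenspace (μ + c) := by
  rw [mem_eigenspace_iff] at hh ⊢
  refine sliceAt_ext (r := r) fun a => ?_
  rw [sliceAt_adjacency, map_smul, sliceAt_extendAt, map_smul, hh, sliceSum, LinearMap.sum_apply]
  simp only [sliceAt_extendAt, ← sum_smul]
  rw [show ∑ b, φ b = c * φ a + φ a by linarith [hφ a]]
  module

noncomputable def centeredIndicator (z : Fin q) (a : Fin q) : ℝ :=
  (if a = z then 1 else 0) - (q : ℝ)⁻¹

lemma sum_centeredIndicator_sub (z a : Fin q) :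
    ∑ b, centeredIndicator z b - centeredIndicator z a = -1 * centeredIndicator z a := by
  have hq : (q : ℝ) ≠ 0 := by exact_mod_cast z.pos.ne'
  simp [centeredIndicator, sum_sub_distrib, hq]

/-- `pairExt z h x = (δ_z (x 0) - δ_z (x 1)) * h (x 2, …)`, the paper's `a₁ ⊗ h`. Centring the
indicator makes both terms tensor products of eigenvectors: `1` and `δ_z - 1/q` are eigenvectors of
`K_q` for `q - 1` and `-1`. -/
noncomputable def pairExt (z : Fin q) (h : (Fin n → Fin q) → ℝ) : (Fin (n + 2) → Fin q) → ℝ :=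
  extendAt 0 (extendAt 0 h 1) (centeredIndicator z)
    - extendAt 0 (extendAt 0 h (centeredIndicator z)) 1

lemma pairExt_mem_eigenU {i : ℕ} (z : Fin q) {h : (Fin n → Fin q) → ℝ} (hh : h ∈ eigenU n q i) :
    pairExt z h ∈ eigenU (n + 2) q (i + 1) := by
  have hone : ∀ a : Fin q,
      ∑ b, (1 : Fin q → ℝ) b - (1 : Fin q → ℝ) a = (q - 1) * (1 : Fin q → ℝ) a := by
    simp
  have e₁ : eigenvalue (n + 2) q (i + 1) = eigenvalue n q i + (q - 1) + -1 := by
    simp only [eigenvalue]; push_cast; ring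
  have e₂ : eigenvalue (n + 2) q (i + 1) = eigenvalue n q i + -1 + (q - 1) := by
    simp only [eigenvalue]; push_cast; ring
  refine sub_mem ?_ ?_
  · rw [eigenU, e₁]
    exact extendAt_mem_eigenspace (extendAt_mem_eigenspace hh hone 0)
      (sum_centeredIndicator_sub z) 0
  · rw [eigenU, e₂]
    exact extendAt_mem_eigenspace (extendAt_mem_eigenspace hh (sum_centeredIndicator_sub z) 0)
      hone 0

lemma suppCard_pairExt (z : Fin q) (h : (Fin n → Fin q) → ℝ) :
    suppCard (n + 2) q (pairExt z h) = 2 * (q - 1) * suppCard n q h := by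
  simp only [suppCard_eq_sum_sliceAt 0, pairExt, map_sub, sliceAt_extendAt, map_smul,
    Pi.one_apply, one_smul, ← sub_smul, suppCard_smul]
  have hcond : ∀ a b : Fin q,
      centeredIndicator z a - centeredIndicator z b = 0 ↔ (a = z ↔ b = z) := by
    intro a b
    simp only [centeredIndicator, sub_sub_sub_cancel_right]
    split_ifs <;> simp_all
  simp only [hcond]
  rw [← add_sum_erase _ _ (mem_univ z)]
  have hone : ∀ a ∈ univ.erase z, #{b | ¬(a = z ↔ b = z)} = 1 := fun a ha =>
    card_eq_one.mpr ⟨z, by ext b; simp [ne_of_mem_erase ha]⟩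
  simp [sum_ite, filter_ne']
  rw [sum_congr rfl fun a ha => by rw [hone a ha], sum_const, card_erase_of_mem (mem_univ z),
    card_univ, Fintype.card_fin, smul_eq_mul]
  ring

end Attainment

theorem exists_mem_eigenU_suppCard_eq {q : ℕ} (hq : 2 ≤ q) : ∀ {i n : ℕ}, 2 * i ≤ n →
    ∃ f : (Fin n → Fin q) → ℝ, f ≠ 0 ∧ f ∈ eigenU n q i ∧
      suppCard n q f = 2 ^ i * (q - 1) ^ i * q ^ (n - 2 * i)
  | 0, n, _ => ⟨fun _ => 1, fun h => by simpa using congrFun h fun _ => ⟨0, by omega⟩,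
      const_mem_eigenU_zero 1, by simp [suppCard_const]⟩
  | i + 1, n, hn => by
    obtain ⟨m, rfl⟩ : ∃ m, n = m + 2 := ⟨n - 2, by omega⟩
    obtain ⟨h, hh0, hh, hsupp⟩ := exists_mem_eigenU_suppCard_eq hq (i := i) (n := m) (by omega)
    have hsupp' : suppCard (m + 2) q (pairExt ⟨0, by omega⟩ h)
        = 2 ^ (i + 1) * (q - 1) ^ (i + 1) * q ^ (m + 2 - 2 * (i + 1)) := by
      rw [suppCard_pairExt, hsupp, show m + 2 - 2 * (i + 1) = m - 2 * i by omega]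
      ring
    have hpos : 0 < suppCard (m + 2) q (pairExt ⟨0, by omega⟩ h) := by
      rw [suppCard_pairExt]
      have := suppCard_pos hh0
      have : 0 < q - 1 := by omega
      positivity
    refine ⟨_, fun h0 => ?_, pairExt_mem_eigenU _ hh, hsupp'⟩
    simp [h0, suppCard_eq_ncard] at hpos

end HammingGraph

open HammingGraph

/-- for q ≥ 3 and i ≤ ⌊n/2⌋, every nonzero eigenfunction of H(n,q) for
eigenvalue n(q-1)-qi has support of cardinality at least 2^i (q-1)^i q^{n-2i},
and this bound is attained. -/
theorem min_support_eigenfun_low (n q i : ℕ) (hq : 3 ≤ q) (hi : i ≤ n / 2) :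
    (∀ f : (Fin n → Fin q) → ℝ, f ≠ 0 → memU n q i f →
      2 ^ i * (q - 1) ^ i * q ^ (n - 2 * i) ≤ suppCard n q f) ∧
    (∃ f : (Fin n → Fin q) → ℝ, f ≠ 0 ∧ memU n q i f ∧
      suppCard n q f = 2 ^ i * (q - 1) ^ i * q ^ (n - 2 * i)) := by
  refine ⟨fun f hf0 hf => ?_, ?_⟩
  · rw [show n - 2 * i = n - i - i by omega]
    exact supportBound (by omega) n i i (by omega) f
      (eigenU_le_eigenSum le_rfl le_rfl (mem_eigenU_iff.mpr hf)) hf0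
  · obtain ⟨f, hf0, hf, hsupp⟩ :=
      exists_mem_eigenU_suppCard_eq (q := q) (by omega) (i := i) (n := n) (by omega)
    exact ⟨f, hf0, mem_eigenU_iff.mp hf, hsupp⟩
end

section
/- Let i+j > n and let f = c · ∏_{k=1}^{n-j} g_k · ∏_{k=1}^{i+j-n} h_k · ∏_{k=1}^{j-i} v_k be a tensor product where c ≠ 0 is a constant, each g_k is a function a₁(s,t) on Σ_q² (support size 2(q-1)), each h_k = a₂(s,t) with s ≠ t on Σ_q (value 1 at s, −1 at t, 0 otherwise), and each v_k = a₄(m) an indicator of a point of Σ_q. Then f ∈ U_{[i,j]}(n,q) and the support of f has cardinality exactly 2^i (q-1)^{n-j}. -/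
/-!
Write the adjacency operator of `H(n,q)` as `n(q-1) - ∑ₘ Lₘ`, where
`Lₘ f x = q f x - ∑ᵥ f (x[m ↦ v])`, so that `U_t = {f | ∑ₘ Lₘ f = q t f}`. Each `Lₘ` kills the
functions that do not depend on coordinate `m` and obeys the Leibniz rule on a product of
functions depending on disjoint sets of coordinates; hence such a product of elements of `U_a`
and `U_b` lies in `U_{a+b}`, and expanding a product of sums gives
`U_{[lo₁,hi₁]} ⋯ U_{[loₖ,hiₖ]} ⊆ U_{[∑ lo, ∑ hi]}`.
Now `a₁(s,t)(u,v) = (a₄(s)(u) - 1/q) - (a₄(t)(v) - 1/q)` and `a₂(s,t) = a₄(s) - a₄(t)` are sums of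
mean-zero functions of one coordinate, so they lie in `U_1`, while
`a₄(m) = 1/q + (a₄(m) - 1/q) ∈ U_0 ⊕ U_1`. With `(n - j) + (i + j - n) = i` factors of the first
two kinds and `j - i` of the third, `f ∈ U_{[i,j]}`. The support of `f` is the product of the
supports of its factors, of sizes `2(q-1)`, `2` and `1`.
-/

open Finset Function

lemma hammingDist_eq_one_iff {ι : Type*} [Fintype ι] [DecidableEq ι] {β : ι → Type*}
    [∀ i, DecidableEq (β i)] {x y : ∀ i, β i} :
    hammingDist x y = 1 ↔ ∃ m, y m ≠ x m ∧ update x m (y m) = y := by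
  constructor
  · intro h
    obtain ⟨m, hm⟩ := card_eq_one.1 h
    have hdiff : ∀ i, x i ≠ y i ↔ i = m := fun i => by
      simpa using congrArg (i ∈ ·) hm
    refine ⟨m, fun h => (hdiff m).2 rfl h.symm, funext fun i => ?_⟩
    rcases eq_or_ne i m with rfl | hi
    · simp
    · rw [update_of_ne hi]
      exact not_not.1 fun h => hi ((hdiff i).1 h)
  · rintro ⟨m, hm, hy⟩
    rw [← hy, hammingDist, card_eq_one]
    refine ⟨m, ext fun i => ?_⟩
    rcases eq_or_ne i m with rfl | hi
    · simpa using hm.symm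
    · simp [hi]

lemma DependsOn.apply_update_of_notMem {ι α β : Type*} [DecidableEq ι] {f : (ι → α) → β}
    {A : Set ι} (hf : DependsOn f A) {m : ι} (hm : m ∉ A) (x : ι → α) (v : α) :
    f (Function.update x m v) = f x :=
  hf fun _ hi => Function.update_of_ne (ne_of_mem_of_not_mem hi hm) _ _

lemma dependsOn_prod {ι κ α M : Type*} [CommMonoid M] {F : κ → (ι → α) → M}
    {A : κ → Set ι} (K : Finset κ) (hF : ∀ ℓ ∈ K, DependsOn (F ℓ) (A ℓ)) :
    DependsOn (∏ ℓ ∈ K, F ℓ) (⋃ ℓ ∈ K, A ℓ) := fun x y h => by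
  simp only [Finset.prod_apply]
  exact prod_congr rfl fun ℓ hℓ => hF ℓ hℓ fun i hi => h i (Set.mem_biUnion hℓ hi)

section HammingEigenspaces

variable {n q : ℕ}

noncomputable def adjacency (n q : ℕ) : Module.End ℝ ((Fin n → Fin q) → ℝ) where
  toFun := adjSum n q
  map_add' f g := by
    funext x
    simp only [adjSum, Pi.add_apply, ← sum_add_distrib, ite_add_ite, add_zero]
  map_smul' c f := by
    funext x
    simp only [adjSum, Pi.smul_apply, smul_eq_mul, RingHom.id_apply, mul_sum, mul_ite, mul_zero]

lemma memU_iff_mem_eigenspace {t : ℕ} {f : (Fin n → Fin q) → ℝ} :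
    memU n q t f ↔ f ∈ (adjacency n q).eigenspace (n * (q - 1) - q * t) := by
  rw [Module.End.mem_eigenspace_iff, funext_iff]
  rfl

lemma adjSum_eq_sum_update (f : (Fin n → Fin q) → ℝ) (x : Fin n → Fin q) :
    adjSum n q f x = ∑ m, ∑ v ∈ univ.erase (x m), f (update x m v) := by
  have himage : (univ.sigma fun m => univ.erase (x m)).image (fun mv => update x mv.1 mv.2)
      = univ.filter (hammingDist x · = 1) := by
    ext y
    simp only [mem_image, mem_sigma, mem_univ, mem_erase, true_and, and_true, mem_filter,
      hammingDist_eq_one_iff, Sigma.exists]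
    constructor
    · rintro ⟨m, v, hv, rfl⟩
      exact ⟨m, by simpa using hv, by simp⟩
    · rintro ⟨m, hm, hy⟩
      exact ⟨m, y m, hm, hy⟩
  have hinj : Set.InjOn (fun mv : (_ : Fin n) × Fin q => update x mv.1 mv.2)
      (univ.sigma fun m => univ.erase (x m)) := by
    rintro ⟨m, v⟩ hv ⟨m', v'⟩ - h
    have hv : v ≠ x m := by simpa using hv
    have hm : m = m' := by
      by_contra hmm
      have := congrFun h m
      simp [update_of_ne hmm] at this
      exact hv this
    subst hm
    simpa using congrFun h m
  rw [adjSum, ← sum_filter, ← himage, sum_image hinj, sum_sigma]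

noncomputable def coordLap (m : Fin n) (f : (Fin n → Fin q) → ℝ) (x : Fin n → Fin q) : ℝ :=
  q * f x - ∑ v, f (update x m v)

lemma adjSum_eq_sub_sum_coordLap (f : (Fin n → Fin q) → ℝ) (x : Fin n → Fin q) :
    adjSum n q f x = n * (q - 1) * f x - ∑ m, coordLap m f x := by
  simp only [adjSum_eq_sum_update, coordLap, sum_erase_eq_sub (mem_univ _), update_eq_self,
    sum_sub_distrib, sum_const, card_univ, Fintype.card_fin, nsmul_eq_mul]
  ring

lemma memU_iff {t : ℕ} {f : (Fin n → Fin q) → ℝ} :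
    memU n q t f ↔ ∀ x, ∑ m, coordLap m f x = q * t * f x := by
  refine forall_congr' fun x => ?_
  rw [adjSum_eq_sub_sum_coordLap]
  constructor <;> intro h <;> linarith

lemma memU_zero_const (c : ℝ) : memU n q 0 (fun _ => c) :=
  memU_iff.2 fun x => by simp [coordLap]

lemma memU_one_of_sum_eq_zero (m : Fin n) {φ : Fin q → ℝ} (hφ : ∑ v, φ v = 0) :
    memU n q 1 (fun x => φ (x m)) := by
  refine memU_iff.2 fun x => ?_
  rw [sum_eq_single m]
  · simp [coordLap, hφ]
  · intro m' _ hm'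
    simp [coordLap, update_of_ne (Ne.symm hm')]
  · simp

lemma coordLap_eq_zero_of_notMem {f : (Fin n → Fin q) → ℝ} {A : Set (Fin n)}
    (hf : DependsOn f A) {m : Fin n} (hm : m ∉ A) (x : Fin n → Fin q) : coordLap m f x = 0 := by
  simp [coordLap, hf.apply_update_of_notMem hm]

lemma coordLap_mul_of_dependsOn {f g : (Fin n → Fin q) → ℝ} {B : Set (Fin n)}
    (hg : DependsOn g B) {m : Fin n} (hm : m ∉ B) (x : Fin n → Fin q) :
    coordLap m (f * g) x = coordLap m f x * g x := by
  simp only [coordLap, Pi.mul_apply, hg.apply_update_of_notMem hm, ← sum_mul]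
  ring

lemma memU_mul {a b : ℕ} {f g : (Fin n → Fin q) → ℝ} {A B : Set (Fin n)} (hAB : Disjoint A B)
    (hf : memU n q a f) (hfA : DependsOn f A) (hg : memU n q b g) (hgB : DependsOn g B) :
    memU n q (a + b) (f * g) := by
  refine memU_iff.2 fun x => ?_
  have leibniz : ∀ m, coordLap m (f * g) x = coordLap m f x * g x + f x * coordLap m g x := by
    intro m
    by_cases hm : m ∈ A
    · have hmB : m ∉ B := hAB.notMem_of_mem_left hm
      rw [coordLap_mul_of_dependsOn hgB hmB, coordLap_eq_zero_of_notMem hgB hmB]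
      ring
    · rw [mul_comm f g, coordLap_mul_of_dependsOn hfA hm, coordLap_eq_zero_of_notMem hfA hm]
      ring
  simp only [leibniz, sum_add_distrib, ← sum_mul, ← mul_sum, memU_iff.1 hf x, memU_iff.1 hg x,
    Pi.mul_apply]
  push_cast
  ring

lemma memU_prod {κ : Type*} {A : κ → Set (Fin n)} (hA : Pairwise (Disjoint on A))
    (K : Finset κ) {d : κ → ℕ} {F : κ → (Fin n → Fin q) → ℝ}
    (hF : ∀ ℓ ∈ K, memU n q (d ℓ) (F ℓ) ∧ DependsOn (F ℓ) (A ℓ)) :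
    memU n q (∑ ℓ ∈ K, d ℓ) (∏ ℓ ∈ K, F ℓ) := by
  classical
  induction K using Finset.induction_on with
  | empty => exact memU_zero_const 1
  | insert ℓ K hℓ ih =>
    rw [sum_insert hℓ, prod_insert hℓ]
    have hdisj : Disjoint (A ℓ) (⋃ k ∈ K, A k) :=
      Set.disjoint_iUnion₂_right.2 fun k hk => hA (ne_of_mem_of_not_mem hk hℓ).symm
    exact memU_mul hdisj (hF ℓ (mem_insert_self ℓ K)).1 (hF ℓ (mem_insert_self ℓ K)).2
      (ih fun k hk => hF k (mem_insert_of_mem hk))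
      (dependsOn_prod K fun k hk => (hF k (mem_insert_of_mem hk)).2)

lemma memUI_sum {i j : ℕ} {κ : Type*} (K : Finset κ) {deg : κ → ℕ}
    {F : κ → (Fin n → Fin q) → ℝ} (hdeg : ∀ k ∈ K, deg k ∈ Icc i j)
    (hF : ∀ k ∈ K, memU n q (deg k) (F k)) : memUI n q i j (∑ k ∈ K, F k) := by
  classical
  refine ⟨fun t => ∑ k ∈ K with deg k = t, F k, fun t _ => ?_,
    (sum_fiberwise_of_maps_to hdeg F).symm⟩
  refine memU_iff_mem_eigenspace.2 (Submodule.sum_mem _ fun k hk => ?_)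
  obtain ⟨hkK, rfl⟩ := mem_filter.1 hk
  exact memU_iff_mem_eigenspace.1 (hF k hkK)

lemma memUI.smul {i j : ℕ} {f : (Fin n → Fin q) → ℝ} (hf : memUI n q i j f) (c : ℝ) :
    memUI n q i j (c • f) := by
  obtain ⟨g, hg, rfl⟩ := hf
  refine ⟨fun t => c • g t, fun t ht => ?_, smul_sum⟩
  exact memU_iff_mem_eigenspace.2 (Submodule.smul_mem _ c (memU_iff_mem_eigenspace.1 (hg t ht)))

def memUIOn (A : Set (Fin n)) (i j : ℕ) (f : (Fin n → Fin q) → ℝ) : Prop :=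
  ∃ g : ℕ → (Fin n → Fin q) → ℝ,
    (∀ t ∈ Icc i j, memU n q t (g t) ∧ DependsOn (g t) A) ∧ f = ∑ t ∈ Icc i j, g t

lemma memUIOn_of_memU {A : Set (Fin n)} {t : ℕ} {f : (Fin n → Fin q) → ℝ}
    (hf : memU n q t f) (hfA : DependsOn f A) : memUIOn A t t f := by
  refine ⟨fun _ => f, fun t' ht' => ?_, by simp⟩
  rw [Icc_self, mem_singleton] at ht'
  exact ht' ▸ ⟨hf, hfA⟩

lemma memUI_prod {κ : Type*} [Fintype κ] {A : κ → Set (Fin n)} (hA : Pairwise (Disjoint on A))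
    {lo hi : κ → ℕ} {F : κ → (Fin n → Fin q) → ℝ} (hF : ∀ ℓ, memUIOn (A ℓ) (lo ℓ) (hi ℓ) (F ℓ)) :
    memUI n q (∑ ℓ, lo ℓ) (∑ ℓ, hi ℓ) (∏ ℓ, F ℓ) := by
  classical
  choose g hg hF using hF
  rw [prod_congr rfl fun ℓ _ => hF ℓ, prod_univ_sum]
  refine memUI_sum (deg := fun τ => ∑ ℓ, τ ℓ) _ (fun τ hτ => ?_) fun τ hτ => ?_
  · rw [Fintype.mem_piFinset] at hτ
    exact mem_Icc.2 ⟨sum_le_sum fun ℓ _ => (mem_Icc.1 (hτ ℓ)).1,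
      sum_le_sum fun ℓ _ => (mem_Icc.1 (hτ ℓ)).2⟩
  · exact memU_prod hA univ (d := τ) (F := fun ℓ => g ℓ (τ ℓ))
      fun ℓ _ => hg ℓ _ (Fintype.mem_piFinset.1 hτ ℓ)

end HammingEigenspaces

section Blocks

variable {q : ℕ}

def a₁ (s t u v : Fin q) : ℝ :=
  if u = s ∧ v ≠ t then 1 else if v = t ∧ u ≠ s then -1 else 0

def a₂ (s t u : Fin q) : ℝ :=
  if u = s then 1 else if u = t then -1 else 0

def a₄ (m u : Fin q) : ℝ :=
  if u = m then 1 else 0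

lemma a₁_eq_sub (s t u v : Fin q) : a₁ s t u v = a₄ s u - a₄ t v := by
  unfold a₁ a₄
  split_ifs <;> simp_all

lemma a₂_eq_sub {s t : Fin q} (hst : s ≠ t) (u : Fin q) : a₂ s t u = a₄ s u - a₄ t u := by
  unfold a₂ a₄
  split_ifs <;> simp_all

lemma sum_a₄ (m : Fin q) : ∑ u, a₄ m u = 1 := by
  simp [a₄]

lemma sum_a₄_sub_inv (m : Fin q) : ∑ u, (a₄ m u - (q : ℝ)⁻¹) = 0 := by
  have : (q : ℝ) ≠ 0 := Nat.cast_ne_zero.2 (Fin.pos m).ne'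
  simp [sum_sub_distrib, sum_a₄, this]

variable {n : ℕ}

lemma memU_a₁ (m₁ m₂ : Fin n) (s t : Fin q) : memU n q 1 (fun x => a₁ s t (x m₁) (x m₂)) := by
  have h₁ := memU_iff_mem_eigenspace.1 (memU_one_of_sum_eq_zero m₁ (sum_a₄_sub_inv s))
  have h₂ := memU_iff_mem_eigenspace.1 (memU_one_of_sum_eq_zero m₂ (sum_a₄_sub_inv t))
  convert memU_iff_mem_eigenspace.2 (Submodule.sub_mem _ h₁ h₂) using 1
  funext x
  simp [a₁_eq_sub]

lemma memU_a₂ (m : Fin n) {s t : Fin q} (hst : s ≠ t) : memU n q 1 (fun x => a₂ s t (x m)) :=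
  memU_one_of_sum_eq_zero m (by simp [a₂_eq_sub hst, sum_sub_distrib, sum_a₄])

lemma memUIOn_a₄ {A : Set (Fin n)} {m₀ : Fin n} (hm₀ : m₀ ∈ A) (m : Fin q) :
    memUIOn A 0 1 (fun x => a₄ m (x m₀)) := by
  refine ⟨fun t x => if t = 0 then (q : ℝ)⁻¹ else a₄ m (x m₀) - (q : ℝ)⁻¹, ?_, ?_⟩
  · intro t ht
    obtain rfl | rfl : t = 0 ∨ t = 1 := by simp at ht; omega
    · exact ⟨memU_zero_const _, (dependsOn_const _).mono (Set.empty_subset A)⟩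
    · refine ⟨memU_one_of_sum_eq_zero m₀ (sum_a₄_sub_inv m), fun x y h => ?_⟩
      simp [h m₀ hm₀]
  · funext x
    rw [show Icc 0 1 = {0, 1} by rfl]
    simp [Finset.sum_apply]

end Blocks

section BlockProduct

variable {n q w a b : ℕ}

def finBlockEquiv (w a b : ℕ) : (Fin w × Fin 2) ⊕ Fin a ⊕ Fin b ≃ Fin (2 * w + a + b) :=
  ((Equiv.sumCongr (finProdFinEquiv.trans (finCongr (Nat.mul_comm w 2))) (Equiv.refl _)).trans
    (Equiv.sumAssoc _ _ _).symm).trans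
    ((Equiv.sumCongr finSumFinEquiv (Equiv.refl _)).trans finSumFinEquiv)

@[simp] lemma finBlockEquiv_inl (k : Fin w) (i : Fin 2) :
    (finBlockEquiv w a b (.inl (k, i)) : ℕ) = 2 * k + i := by
  simp [finBlockEquiv]; ring

@[simp] lemma finBlockEquiv_inr_inl (k : Fin a) :
    (finBlockEquiv w a b (.inr (.inl k)) : ℕ) = 2 * w + k := by
  simp [finBlockEquiv]

@[simp] lemma finBlockEquiv_inr_inr (k : Fin b) :
    (finBlockEquiv w a b (.inr (.inr k)) : ℕ) = 2 * w + a + k := by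
  simp [finBlockEquiv]

variable (e : (Fin w × Fin 2) ⊕ Fin a ⊕ Fin b ≃ Fin n)

noncomputable def blockProduct (c : ℝ) (s t : Fin w → Fin q) (p r : Fin a → Fin q)
    (ms : Fin b → Fin q) (x : Fin n → Fin q) : ℝ :=
  c * (∏ k, a₁ (s k) (t k) (x (e (.inl (k, 0)))) (x (e (.inl (k, 1))))) *
    (∏ k, a₂ (p k) (r k) (x (e (.inr (.inl k))))) * ∏ k, a₄ (ms k) (x (e (.inr (.inr k))))

lemma memUI_blockProduct (c : ℝ) (s t : Fin w → Fin q) {p r : Fin a → Fin q}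
    (hpr : ∀ k, p k ≠ r k) (ms : Fin b → Fin q) :
    memUI n q (w + a) (w + a + b) (blockProduct e c s t p r ms) := by
  let block : Fin n → Fin w ⊕ Fin a ⊕ Fin b := Sum.map Prod.fst id ∘ e.symm
  have hblock : ∀ y, e y ∈ block ⁻¹' {Sum.map Prod.fst id y} := fun y => by simp [block]
  let F : Fin w ⊕ Fin a ⊕ Fin b → (Fin n → Fin q) → ℝ :=
    Sum.elim (fun k x => a₁ (s k) (t k) (x (e (.inl (k, 0)))) (x (e (.inl (k, 1)))))
      (Sum.elim (fun k x => a₂ (p k) (r k) (x (e (.inr (.inl k)))))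
        (fun k x => a₄ (ms k) (x (e (.inr (.inr k))))))
  let lo : Fin w ⊕ Fin a ⊕ Fin b → ℕ := Sum.elim 1 (Sum.elim 1 0)
  have hF : ∀ ℓ, memUIOn (block ⁻¹' {ℓ}) (lo ℓ) 1 (F ℓ) := by
    rintro (k | k | k)
    · refine memUIOn_of_memU (memU_a₁ _ _ _ _) fun x y h => ?_
      simp only [F, Sum.elim_inl, h _ (hblock (.inl (k, 0))), h _ (hblock (.inl (k, 1)))]
    · refine memUIOn_of_memU (memU_a₂ _ (hpr k)) fun x y h => ?_
      simp only [F, Sum.elim_inl, Sum.elim_inr, h _ (hblock (.inr (.inl k)))]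
    · exact memUIOn_a₄ (hblock (.inr (.inr k))) _
  have hprod : blockProduct e c s t p r ms = c • ∏ ℓ, F ℓ := by
    funext x
    simp [blockProduct, F, Fintype.prod_sum_type, Finset.prod_apply, mul_assoc]
  have := (memUI_prod (pairwise_disjoint_fiber block) hF).smul c
  rw [hprod]
  simpa [lo, Fintype.sum_sum_type, add_assoc] using this

def blockSplit : (Fin n → Fin q) ≃ (Fin w → Fin q × Fin q) × (Fin a → Fin q) × (Fin b → Fin q) :=
  (e.arrowCongr (Equiv.refl (Fin q))).symm.trans <|
    (Equiv.sumArrowEquivProdArrow _ _ _).trans <|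
      Equiv.prodCongr ((Equiv.curry _ _ _).trans (Equiv.arrowCongr (Equiv.refl _) (piFinTwoEquiv _)))
        (Equiv.sumArrowEquivProdArrow _ _ _)

lemma blockSplit_apply (x : Fin n → Fin q) :
    blockSplit e x = (fun k => (x (e (.inl (k, 0))), x (e (.inl (k, 1)))),
      fun k => x (e (.inr (.inl k))), fun k => x (e (.inr (.inr k)))) := rfl

lemma card_support_a₁ (s t : Fin q) :
    #{uv : Fin q × Fin q | a₁ s t uv.1 uv.2 ≠ 0} = 2 * (q - 1) := by
  have : ({uv : Fin q × Fin q | a₁ s t uv.1 uv.2 ≠ 0} : Finset (Fin q × Fin q))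
      = {s} ×ˢ univ.erase t ∪ univ.erase s ×ˢ {t} := by
    ext ⟨u, v⟩
    simp only [mem_filter_univ, mem_union, mem_product, mem_singleton, mem_erase, mem_univ,
      and_true]
    unfold a₁
    split_ifs <;> simp_all
    tauto
  have hdisj : Disjoint ({s} ×ˢ univ.erase t) (univ.erase s ×ˢ {t}) :=
    disjoint_left.2 fun uv h₁ h₂ =>
      (mem_erase.1 (mem_product.1 h₂).1).1 (mem_singleton.1 (mem_product.1 h₁).1)
  rw [this, card_union_of_disjoint hdisj]
  simp [card_erase_of_mem]
  ring

lemma card_support_a₂ {s t : Fin q} (hst : s ≠ t) : #{u | a₂ s t u ≠ 0} = 2 := by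
  have : ({u | a₂ s t u ≠ 0} : Finset (Fin q)) = {s, t} := by
    ext u
    simp only [mem_filter_univ, mem_insert, mem_singleton]
    unfold a₂
    split_ifs <;> simp_all
  rw [this, card_pair hst]

lemma card_support_a₄ (m : Fin q) : #{u | a₄ m u ≠ 0} = 1 := by
  simp [a₄, filter_eq']

lemma suppCard_blockProduct {c : ℝ} (hc : c ≠ 0) (s t : Fin w → Fin q) {p r : Fin a → Fin q}
    (hpr : ∀ k, p k ≠ r k) (ms : Fin b → Fin q) :
    suppCard n q (blockProduct e c s t p r ms) = 2 ^ (w + a) * (q - 1) ^ w := by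
  let S : Finset ((Fin w → Fin q × Fin q) × (Fin a → Fin q) × (Fin b → Fin q)) :=
    Fintype.piFinset (fun k => {uv | a₁ (s k) (t k) uv.1 uv.2 ≠ 0}) ×ˢ
      Fintype.piFinset (fun k => {u | a₂ (p k) (r k) u ≠ 0}) ×ˢ
      Fintype.piFinset (fun k => {u | a₄ (ms k) u ≠ 0})
  have hsupp : ∀ x, blockProduct e c s t p r ms x ≠ 0 ↔ blockSplit e x ∈ S := fun x => by
    simp [S, blockProduct, blockSplit_apply, hc, prod_ne_zero_iff, and_assoc]
  rw [suppCard, Nat.card_congr ((blockSplit e).subtypeEquiv hsupp), Nat.card_eq_finsetCard]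
  simp only [S, card_product, Fintype.card_piFinset, card_support_a₁, card_support_a₂ (hpr _),
    card_support_a₄, prod_const, card_univ, Fintype.card_fin]
  ring

end BlockProduct

lemma blockProduct_finBlockEquiv {n q w a b : ℕ} (h : 2 * w + a + b = n) (c : ℝ)
    (s t : Fin w → Fin q) (p r : Fin a → Fin q) (ms : Fin b → Fin q) (x : Fin n → Fin q) :
    blockProduct ((finBlockEquiv w a b).trans (finCongr h)) c s t p r ms x =
      c * (∏ k : Fin w, a₁ (s k) (t k) (x ⟨2 * k, by have := k.2; omega⟩)
          (x ⟨2 * k + 1, by have := k.2; omega⟩)) *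
        (∏ k : Fin a, a₂ (p k) (r k) (x ⟨2 * w + k, by have := k.2; omega⟩)) *
        ∏ k : Fin b, a₄ (ms k) (x ⟨2 * w + a + k, by have := k.2; omega⟩) := by
  simp only [blockProduct, Equiv.trans_apply]
  congr! with k <;> simp

/-- for i+j > n, the tensor product of a nonzero constant c, n-j functions
a₁(s_k,t_k) (on coordinate pairs), i+j-n functions a₂(p_k,r_k) with p_k ≠ r_k, and j-i
indicators a₄(m_k) lies in U_{[i,j]}(n,q) and has support of cardinality 2^i (q-1)^{n-j}. -/
theorem construction_F2 (n q i j : ℕ) (hij : i ≤ j) (hjn : j ≤ n) (hn : n < i + j)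
    (c : ℝ) (hc : c ≠ 0) (s t : Fin (n - j) → Fin q)
    (p r : Fin (i + j - n) → Fin q) (hpr : ∀ k, p k ≠ r k)
    (ms : Fin (j - i) → Fin q)
    (f : (Fin n → Fin q) → ℝ)
    (hf : f = fun x => c *
      (∏ k : Fin (n - j),
        (if x ⟨2 * (k : ℕ), by have := k.isLt; omega⟩ = s k ∧
              x ⟨2 * (k : ℕ) + 1, by have := k.isLt; omega⟩ ≠ t k then (1 : ℝ)
          else if x ⟨2 * (k : ℕ) + 1, by have := k.isLt; omega⟩ = t k ∧
              x ⟨2 * (k : ℕ), by have := k.isLt; omega⟩ ≠ s k then -1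
          else 0)) *
      (∏ k : Fin (i + j - n),
        (if x ⟨2 * (n - j) + (k : ℕ), by have := k.isLt; omega⟩ = p k then (1 : ℝ)
          else if x ⟨2 * (n - j) + (k : ℕ), by have := k.isLt; omega⟩ = r k then -1
          else 0)) *
      (∏ k : Fin (j - i),
        (if x ⟨2 * (n - j) + (i + j - n) + (k : ℕ), by have := k.isLt; omega⟩ = ms k
          then (1 : ℝ) else 0))) :
    memUI n q i j f ∧ suppCard n q f = 2 ^ i * (q - 1) ^ (n - j) := by
  have hnn : 2 * (n - j) + (i + j - n) + (j - i) = n := by omega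
  have hf' : f = blockProduct ((finBlockEquiv _ _ _).trans (finCongr hnn)) c s t p r ms :=
    hf.trans (funext fun x => (blockProduct_finBlockEquiv hnn c s t p r ms x).symm)
  have hi : n - j + (i + j - n) = i := by omega
  have hj : i + (j - i) = j := by omega
  subst hf'
  constructor
  · simpa only [hi, hj] using memUI_blockProduct _ c s t hpr ms
  · simpa only [hi] using suppCard_blockProduct _ hc s t hpr ms
end
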